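/- arXiv:1604.02516 — 2 statements merged into one kernel-verified Lean document; each statement's English description precedes it below -/
import Mathlib

section
/- Let p₀ = √(1+|p|²), q₀ = √(1+|q|²), g² = 2(p₀q₀ − p·q − 1), s = g² + 4, and for p+q ≠ 0, γ̃ = (p₀+q₀)/√s. For ω ∈ 𝕊², define p' = (p+q)/2 + (g/2)(ω + (γ̃−1)(p+q)((p+q)·ω)/|p+q|²) and q' = (p+q)/2 − (g/2)(ω + (γ̃−1)(p+q)((p+q)·ω)/|p+q|²), with energies p₀' = (p₀+q₀)/2 + (g/(2√s))(p+q)·ω and q₀' = (p₀+q₀)/2 − (g/(2√s))(p+q)·ω. Then p' + q' = p + q and p₀' + q₀' = p₀ + q₀, and moreover p₀' = √(1+|p'|²). -/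
open scoped RealInnerProductSpace

noncomputable section

/-- Relativistic energy `p₀ = √(1+|p|²)`. -/
def en (p : EuclideanSpace ℝ (Fin 3)) : ℝ := Real.sqrt (1 + ‖p‖ ^ 2)

/-- Relative momentum `g ≥ 0` with `g² = 2(p₀q₀ − p·q − 1)`. -/
def relg (p q : EuclideanSpace ℝ (Fin 3)) : ℝ :=
  Real.sqrt (2 * (en p * en q - ⟪p, q⟫ - 1))

/-! The post-collision momenta are the centre-of-momentum momenta `±(g/2) ω` boosted back to the
lab frame, whose velocity is `(p + q) / (p₀ + q₀)` with Lorentz factor `γ̃ = (p₀ + q₀)/√s`.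
The boost of `ω` has spatial part `w = ω + (γ̃ - 1) (P·ω / |P|²) P` with `P = p + q`, so
`P·w = γ̃ (P·ω)` and `|w|² = 1 + (γ̃² - 1)(P·ω)²/|P|² = 1 + (P·ω)²/s`, using the invariant
`(p₀ + q₀)² = s + |P|²`. Expanding `1 + |p'|²` then gives exactly `p₀'²`, and `p₀' ≥ 0` because `g ≤ √s` and
`|P| ≤ p₀ + q₀`. -/

section Boost

variable {V : Type*} [NormedAddCommGroup V] [InnerProductSpace ℝ V]

def boostDir (P ω : V) (γ : ℝ) : V := ω + ((γ - 1) * ⟪P, ω⟫ / ‖P‖ ^ 2) • P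

theorem inner_boostDir {P : V} (hP : P ≠ 0) (ω : V) (γ : ℝ) :
    ⟪P, boostDir P ω γ⟫ = γ * ⟪P, ω⟫ := by
  have hP2 : ‖P‖ ^ 2 ≠ 0 := by positivity
  rw [boostDir, inner_add_right, real_inner_smul_right, real_inner_self_eq_norm_sq]
  field_simp
  ring

theorem norm_boostDir_sq {P : V} (hP : P ≠ 0) (ω : V) (γ : ℝ) :
    ‖boostDir P ω γ‖ ^ 2 = ‖ω‖ ^ 2 + (γ ^ 2 - 1) * ⟪P, ω⟫ ^ 2 / ‖P‖ ^ 2 := by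
  have hP2 : ‖P‖ ^ 2 ≠ 0 := by positivity
  rw [boostDir, norm_add_sq_real, real_inner_smul_right, norm_smul, mul_pow, Real.norm_eq_abs,
    sq_abs, real_inner_comm]
  field_simp
  ring

theorem one_add_norm_sq_boosted {P ω : V} (hP : P ≠ 0) (hω : ‖ω‖ = 1) {E g r : ℝ}
    (hr : r ≠ 0) (hE : E ^ 2 = r ^ 2 + ‖P‖ ^ 2) (hg : r ^ 2 = g ^ 2 + 4) :
    1 + ‖(1 / 2 : ℝ) • P + (g / 2) • boostDir P ω (E / r)‖ ^ 2 =
      (E / 2 + g / (2 * r) * ⟪P, ω⟫) ^ 2 := by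
  have hγ : (E / r) ^ 2 - 1 = ‖P‖ ^ 2 / r ^ 2 := by
    field_simp
    linarith
  rw [norm_add_sq_real, real_inner_smul_left, real_inner_smul_right, inner_boostDir hP,
    norm_smul, norm_smul, mul_pow, mul_pow, norm_boostDir_sq hP, hω, hγ, Real.norm_eq_abs,
    Real.norm_eq_abs, sq_abs, sq_abs]
  field_simp
  linear_combination (-r ^ 2) * hE - r ^ 2 * hg

theorem boosted_energy_nonneg {P ω : V} (hω : ‖ω‖ = 1) {E g r : ℝ} (hg : 0 ≤ g) (hr : 0 < r)
    (hgr : g ≤ r) (hPE : ‖P‖ ≤ E) :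
    0 ≤ E / 2 + g / (2 * r) * ⟪P, ω⟫ := by
  have hPω : |⟪P, ω⟫| ≤ ‖P‖ := by simpa [hω] using abs_real_inner_le_norm P ω
  have hgPω : g * |⟪P, ω⟫| ≤ r * E := mul_le_mul hgr (hPω.trans hPE) (abs_nonneg _) hr.le
  rw [div_mul_eq_mul_div, div_add_div _ _ two_ne_zero (by positivity)]
  apply div_nonneg _ (by positivity)
  nlinarith [neg_abs_le ⟪P, ω⟫]

end Boost

theorem inner_add_one_le_sqrt_mul_sqrt {V : Type*} [NormedAddCommGroup V] [InnerProductSpace ℝ V]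
    (p q : V) : ⟪p, q⟫ + 1 ≤ Real.sqrt (1 + ‖p‖ ^ 2) * Real.sqrt (1 + ‖q‖ ^ 2) := by
  rw [← Real.sqrt_mul (by positivity)]
  calc ⟪p, q⟫ + 1 ≤ ‖p‖ * ‖q‖ + 1 := by linarith [real_inner_le_norm p q]
    _ = Real.sqrt ((‖p‖ * ‖q‖ + 1) ^ 2) := (Real.sqrt_sq (by positivity)).symm
    _ ≤ _ := Real.sqrt_le_sqrt (by nlinarith [sq_nonneg (‖p‖ - ‖q‖)])

theorem en_sq (p : EuclideanSpace ℝ (Fin 3)) : en p ^ 2 = 1 + ‖p‖ ^ 2 :=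
  Real.sq_sqrt (by positivity)

theorem en_nonneg (p : EuclideanSpace ℝ (Fin 3)) : 0 ≤ en p := Real.sqrt_nonneg _

theorem relg_sq (p q : EuclideanSpace ℝ (Fin 3)) :
    relg p q ^ 2 = 2 * (en p * en q - ⟪p, q⟫ - 1) :=
  Real.sq_sqrt (by have := inner_add_one_le_sqrt_mul_sqrt p q; unfold en; linarith)

theorem en_add_en_sq (p q : EuclideanSpace ℝ (Fin 3)) :
    (en p + en q) ^ 2 = relg p q ^ 2 + 4 + ‖p + q‖ ^ 2 := by
  rw [relg_sq, norm_add_sq_real]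
  linear_combination en_sq p + en_sq q

theorem post_collision_conservation (p q ω : EuclideanSpace ℝ (Fin 3))
    (hω : ‖ω‖ = 1) (hpq : p + q ≠ 0) :
    let g := relg p q
    let s := g ^ 2 + 4
    let γt := (en p + en q) / Real.sqrt s
    let w := ω + ((γt - 1) * ⟪p + q, ω⟫ / ‖p + q‖ ^ 2) • (p + q)
    let p' := (1 / 2 : ℝ) • (p + q) + (g / 2) • w
    let q' := (1 / 2 : ℝ) • (p + q) - (g / 2) • w
    let p0' := (en p + en q) / 2 + (g / (2 * Real.sqrt s)) * ⟪p + q, ω⟫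
    let q0' := (en p + en q) / 2 - (g / (2 * Real.sqrt s)) * ⟪p + q, ω⟫
    p' + q' = p + q ∧ p0' + q0' = en p + en q ∧ p0' = Real.sqrt (1 + ‖p'‖ ^ 2) := by
  intro g s γt w p' q' p0' q0'
  refine ⟨by module, by ring, ?_⟩
  have hs : Real.sqrt s ^ 2 = g ^ 2 + 4 := Real.sq_sqrt (by positivity)
  have hs0 : 0 < Real.sqrt s := Real.sqrt_pos.mpr (by positivity)
  have hE : (en p + en q) ^ 2 = Real.sqrt s ^ 2 + ‖p + q‖ ^ 2 := by rw [hs, en_add_en_sq]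
  have hp' : 1 + ‖p'‖ ^ 2 = p0' ^ 2 := one_add_norm_sq_boosted hpq hω hs0.ne' hE hs
  have hgs : g ≤ Real.sqrt s := Real.le_sqrt_of_sq_le (le_add_of_nonneg_right zero_le_four)
  have hPE : ‖p + q‖ ≤ en p + en q :=
    le_of_sq_le_sq (hE ▸ le_add_of_nonneg_left (sq_nonneg _))
      (add_nonneg (en_nonneg p) (en_nonneg q))
  rw [hp']
  exact (Real.sqrt_sq (boosted_energy_nonneg hω (Real.sqrt_nonneg _) hs0 hgs hPE)).symm
end
end

section
/- Let γ > −2, c > 0, and 1 ≤ d < 2/max{−γ, 1}. Suppose the collision kernel satisfies 0 ≤ σ(g,θ) ≤ g^a sin^γ θ with 0 ≤ a ≤ 2 + γ, and let v_φ = g√s/(p₀q₀) with s = g²+4, g² = 2(p₀q₀ − p·q − 1). Then there is C > 0 such that for all p ∈ ℝ³, ∫_{ℝ³} ∫_{𝕊²} |v_φ σ(g,θ)|^d e^{−c q₀} dω dq ≤ C (1+|p|)^{ad/2}. -/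
open MeasureTheory
open scoped RealInnerProductSpace

noncomputable section

/-- Møller velocity `v_φ = g√s/(p₀q₀)` with `s = g² + 4`. -/
def moller (p q : EuclideanSpace ℝ (Fin 3)) : ℝ :=
  relg p q * Real.sqrt (relg p q ^ 2 + 4) / (en p * en q)

/-- Polar angle of `ω ∈ 𝕊²` relative to a fixed axis. -/
def polarAngle (ω : EuclideanSpace ℝ (Fin 3)) : ℝ :=
  Real.arccos ⟪(EuclideanSpace.single 0 1 : EuclideanSpace ℝ (Fin 3)), ω⟫

/-!
Since `g² ≤ 4 p₀q₀` and `p₀, q₀ ≥ 1`, the Møller velocity is at most `6` and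
`σ(g, θ) ≤ (4 p₀q₀)^{a/2} sin^γ θ`. The integrand is therefore bounded by a constant times
`p₀^{ad/2} · q₀^{ad/2} e^{-c q₀} · sin^{γd} θ`, and the double integral splits into a
`q`-integral, finite because `q₀^{ad/2} e^{-c q₀}` decays faster than `(1 + |q|²)^{-2}`, and an
angular integral, finite because `γd > -2`. For the latter, polar coordinates turn it into
`3 ∫_{|v|<1} sin^{γd} θ(v/|v|) dv`, and on the unit ball
`sin^{γd} θ(v/|v|) ≤ (v₁² + v₂²)^b ≤ |v₀|^b |v₁|^b |v₂|^b` with `b = min(γd/2, 0) > -1`,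
which is integrable on the cube `[-1, 1]³`. Finally `p₀ ≤ 1 + |p|`.
-/

open MeasureTheory Measure Set Metric Real
open scoped ENNReal Nat

local notation "ℝ³" => EuclideanSpace ℝ (Fin 3)

section Polar

variable {E : Type*} [NormedAddCommGroup E] [NormedSpace ℝ E] [FiniteDimensional ℝ E]
  [MeasurableSpace E] [BorelSpace E] [Nontrivial E] (μ : Measure E) [μ.IsAddHaarMeasure]

theorem lintegral_toSphere_eq {f : E → ℝ≥0∞} (hf : Measurable f) :
    ∫⁻ ω, f ω ∂μ.toSphere = Module.finrank ℝ E * ∫⁻ x in ball (0 : E) 1, f (‖x‖⁻¹ • x) ∂μ := by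
  set n := Module.finrank ℝ E
  have hn : 0 < n := Module.finrank_pos
  set one : Ioi (0 : ℝ) := ⟨1, mem_Ioi.2 one_pos⟩
  have hradial : volumeIoiPow (n - 1) (Iio one) = (n : ℝ≥0∞)⁻¹ := by
    rw [volumeIoiPow_apply_Iio, Nat.cast_pred hn, sub_add_cancel, one_pow, one_div,
      ENNReal.ofReal_inv_of_pos (by positivity), ENNReal.ofReal_natCast]
  -- In polar coordinates `μ = μ.toSphere ⊗ rⁿ⁻¹ dr`, and the unit ball has radial mass `1 / n`.
  have hmul : (∫⁻ ω, f ω ∂μ.toSphere) * (n : ℝ≥0∞)⁻¹ =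
      ∫⁻ x in ball (0 : E) 1, f (‖x‖⁻¹ • x) ∂μ := by
    calc (∫⁻ ω, f ω ∂μ.toSphere) * (n : ℝ≥0∞)⁻¹
        = ∫⁻ y, f y.1 * (Iio one).indicator 1 y.2 ∂(μ.toSphere.prod (volumeIoiPow (n - 1))) := by
          rw [lintegral_prod_mul (f := fun ω : sphere (0 : E) 1 ↦ f ω)
            (hf.comp measurable_subtype_coe).aemeasurable
            (measurable_one.indicator measurableSet_Iio).aemeasurable,
            lintegral_indicator_one measurableSet_Iio, hradial]
      _ = ∫⁻ x : ({0}ᶜ : Set E), f (‖(x : E)‖⁻¹ • x) * (Iio one).indicator 1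
            (homeomorphUnitSphereProd E x).2 ∂(μ.comap (↑)) := by
          rw [← (measurePreserving_homeomorphUnitSphereProd μ).lintegral_comp
            (f := fun y ↦ f y.1 * (Iio one).indicator 1 y.2)
            ((hf.comp (measurable_subtype_coe.comp measurable_fst)).mul
              ((measurable_one.indicator measurableSet_Iio).comp measurable_snd))]
          simp only [homeomorphUnitSphereProd_apply_fst_coe]
      _ = ∫⁻ x in {0}ᶜ, (ball (0 : E) 1).indicator (fun x ↦ f (‖x‖⁻¹ • x)) x ∂μ := by
          rw [← lintegral_subtype_comap (measurableSet_singleton 0).compl]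
          congr 1 with x
          by_cases hx : ‖(x : E)‖ < 1 <;> simp [indicator, one, hx, ← Subtype.coe_lt_coe]
      _ = ∫⁻ x in ball (0 : E) 1, f (‖x‖⁻¹ • x) ∂μ := by
          rw [restrict_compl_singleton, lintegral_indicator measurableSet_ball]
  rw [← hmul, mul_comm, mul_assoc, ENNReal.inv_mul_cancel (by simp [hn.ne']) (by simp), mul_one]

end Polar

section Kinematics

variable (p q : ℝ³)

lemma one_le_en : 1 ≤ en p :=
  one_le_sqrt.mpr (by nlinarith [sq_nonneg ‖p‖])

lemma en_pos : 0 < en p := one_pos.trans_le (one_le_en p)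

lemma norm_le_en : ‖p‖ ≤ en p :=
  le_sqrt_of_sq_le (by linarith)

lemma en_le_one_add_norm : en p ≤ 1 + ‖p‖ := sqrt_one_add_norm_sq_le p

lemma relg_nonneg : 0 ≤ relg p q := sqrt_nonneg _

lemma continuous_en : Continuous en := by unfold en; fun_prop

lemma relg_sq_le : relg p q ^ 2 ≤ 4 * (en p * en q) := by
  have hpq : -⟪p, q⟫ ≤ en p * en q := by
    nlinarith [neg_le_abs ⟪p, q⟫, abs_real_inner_le_norm p q, norm_le_en p, norm_le_en q,
      norm_nonneg p, norm_nonneg q]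
  rw [relg, sq_sqrt', max_le_iff]
  constructor <;> nlinarith [en_pos p, en_pos q]

lemma relg_rpow_le {a : ℝ} (ha : 0 ≤ a) : relg p q ^ a ≤ (4 * (en p * en q)) ^ (a / 2) := by
  calc relg p q ^ a = (relg p q ^ 2) ^ (a / 2) := by
        rw [← rpow_natCast, ← rpow_mul (relg_nonneg p q)]; ring_nf
    _ ≤ (4 * (en p * en q)) ^ (a / 2) := by
        gcongr
        exact relg_sq_le p q

lemma moller_nonneg : 0 ≤ moller p q := by
  have := en_pos p; have := en_pos q
  unfold moller relg; positivity

lemma moller_le_six : moller p q ≤ 6 := by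
  have hu : 1 ≤ en p * en q := one_le_mul_of_one_le_of_one_le (one_le_en p) (one_le_en q)
  have hg := relg_sq_le p q
  have hs := sq_sqrt (show 0 ≤ relg p q ^ 2 + 4 by positivity)
  rw [moller, div_le_iff₀ (by positivity)]
  have hg0 := relg_nonneg p q
  refine (pow_le_pow_iff_left₀ (by positivity) (by positivity) two_ne_zero).mp ?_
  rw [mul_pow, hs]
  nlinarith

end Kinematics

lemma rpow_mul_exp_neg_mul_le {k c t : ℝ} (hc : 0 < c) (ht : 1 ≤ t) :
    t ^ k * exp (-c * t) ≤ ⌈k⌉₊ ! / c ^ ⌈k⌉₊ := by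
  set n := ⌈k⌉₊
  have hpow : t ^ k ≤ t ^ n := by
    rw [← rpow_natCast]; exact rpow_le_rpow_of_exponent_le ht (Nat.le_ceil k)
  have hexp : (c * t) ^ n / n ! ≤ exp (c * t) := Real.pow_div_factorial_le_exp _ (by positivity) n
  rw [mul_pow, div_le_iff₀ (by positivity)] at hexp
  rw [le_div_iff₀ (by positivity), neg_mul, exp_neg]
  calc t ^ k * (exp (c * t))⁻¹ * c ^ n ≤ t ^ n * c ^ n * (exp (c * t))⁻¹ := by
        rw [mul_right_comm]; gcongr
    _ ≤ exp (c * t) * n ! * (exp (c * t))⁻¹ := by rw [mul_comm (t ^ n)]; gcongr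
    _ = n ! := by field_simp

lemma integrable_en_rpow_mul_exp_neg {e c : ℝ} (hc : 0 < c) :
    Integrable (fun q : ℝ³ ↦ en q ^ e * exp (-c * en q)) := by
  set M : ℝ := ⌈e + 4⌉₊ ! / c ^ ⌈e + 4⌉₊
  refine ((integrable_rpow_neg_one_add_norm_sq (r := 4) (by norm_num)).const_mul M).mono'
    ((continuous_en.rpow_const fun q ↦ .inl (en_pos q).ne').mul
      (continuous_exp.comp (continuous_const.mul continuous_en))).aestronglyMeasurable
    (Filter.Eventually.of_forall fun q ↦ ?_)
  have hq := en_pos q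
  have hdecay : ((1 : ℝ) + ‖q‖ ^ 2) ^ (-4 / 2 : ℝ) = en q ^ (-4 : ℝ) := by
    rw [en, sqrt_eq_rpow, ← rpow_mul (by positivity)]; norm_num
  rw [norm_of_nonneg (by positivity), hdecay]
  calc en q ^ e * exp (-c * en q) = en q ^ (e + 4) * exp (-c * en q) * en q ^ (-4 : ℝ) := by
        rw [rpow_add hq, rpow_neg hq.le]; field_simp
    _ ≤ M * en q ^ (-4 : ℝ) := by
        gcongr; exact rpow_mul_exp_neg_mul_le hc (one_le_en q)

lemma intervalIntegrable_abs_rpow {r : ℝ} (hr : -1 < r) (a b : ℝ) :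
    IntervalIntegrable (fun x ↦ |x| ^ r) volume a b := by
  have hpos : ∀ c, 0 ≤ c → IntervalIntegrable (fun x ↦ |x| ^ r) volume 0 c := fun c hc ↦
    (intervalIntegral.intervalIntegrable_rpow' hr).congr fun x hx ↦ by
      rw [uIoc_of_le hc] at hx
      simp [abs_of_pos hx.1]
  have hall : ∀ c, IntervalIntegrable (fun x ↦ |x| ^ r) volume 0 c := by
    intro c
    rcases le_total 0 c with hc | hc
    · exact hpos c hc
    · rw [IntervalIntegrable.iff_comp_neg]
      simpa using hpos (-c) (by linarith)
  exact (hall a).symm.trans (hall b)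

lemma integrableOn_cube_prod_abs_rpow {b : ℝ} (hb : -1 < b) :
    IntegrableOn (fun v : ℝ³ ↦ ∏ i, |v i| ^ b) (WithLp.ofLp ⁻¹' univ.pi fun _ ↦ Ioc (-1) 1) := by
  refine ((PiLp.volume_preserving_ofLp (Fin 3)).integrableOn_comp_preimage
    (MeasurableEquiv.toLp 2 (Fin 3 → ℝ)).symm.measurableEmbedding
    (f := fun x : Fin 3 → ℝ ↦ ∏ i, |x i| ^ b)).2 ?_
  rw [IntegrableOn, volume_pi, Measure.restrict_pi_pi]
  exact Integrable.fintype_prod fun _ ↦ (intervalIntegrable_abs_rpow hb (-1) 1).1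

lemma ae_forall_apply_ne_zero : ∀ᵐ v : ℝ³, ∀ i, v i ≠ 0 :=
  (PiLp.volume_preserving_ofLp (Fin 3)).quasiMeasurePreserving.ae
    (ae_all_iff.2 fun i ↦ Measure.ae_eval_ne _ i 0)

lemma continuous_polarAngle : Continuous polarAngle := by unfold polarAngle; fun_prop

lemma polarAngle_mem_Icc (ω : ℝ³) : polarAngle ω ∈ Icc 0 π := ⟨arccos_nonneg _, arccos_le_pi _⟩

lemma sin_polarAngle_nonneg (ω : ℝ³) : 0 ≤ sin (polarAngle ω) :=
  sin_nonneg_of_nonneg_of_le_pi (polarAngle_mem_Icc ω).1 (polarAngle_mem_Icc ω).2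

lemma sin_polarAngle (ω : ℝ³) : sin (polarAngle ω) = √(1 - ω 0 ^ 2) := by
  rw [polarAngle, EuclideanSpace.inner_single_left, sin_arccos]
  simp

-- Off the coordinate planes only: `Real.rpow` has `0 ^ b = 0` for `b < 0`.
lemma sin_polarAngle_smul_rpow_le {β b : ℝ} (hb : b ≤ β / 2) (hb0 : b ≤ 0) {v : ℝ³}
    (hv : ‖v‖ < 1) (hv0 : ∀ i, v i ≠ 0) :
    sin (polarAngle (‖v‖⁻¹ • v)) ^ β ≤ ∏ i, |v i| ^ b := by
  have hnorm : ‖v‖ ^ 2 = v 0 ^ 2 + v 1 ^ 2 + v 2 ^ 2 := by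
    simp [EuclideanSpace.norm_sq_eq, Fin.sum_univ_three]
  have h1 := hv0 1
  have h2 := hv0 2
  have hvpos : 0 < ‖v‖ := norm_pos_iff.2 fun h ↦ h1 (by simp [h])
  set r := v 1 ^ 2 + v 2 ^ 2 with hr
  have hrpos : 0 < r := by positivity
  set ρ := r / ‖v‖ ^ 2 with hρ
  have hsin : sin (polarAngle (‖v‖⁻¹ • v)) = √ρ := by
    rw [sin_polarAngle, PiLp.smul_apply, smul_eq_mul, hρ, hr]
    congr 1
    field_simp
    linarith
  have hρ1 : ρ ≤ 1 := div_le_one_of_le₀ (by linarith [sq_nonneg (v 0)]) (sq_nonneg _)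
  have hv0le : |v 0| ≤ 1 := (sq_le_one_iff_abs_le_one _).1 (by nlinarith)
  calc sin (polarAngle (‖v‖⁻¹ • v)) ^ β = ρ ^ (β / 2) := by
        rw [hsin, sqrt_eq_rpow, ← rpow_mul (by positivity)]; ring_nf
    _ ≤ ρ ^ b := rpow_le_rpow_of_exponent_ge (by positivity) hρ1 hb
    _ ≤ r ^ b := by
        rw [hρ, div_rpow hrpos.le (sq_nonneg _)]
        exact div_le_self (by positivity)
          (one_le_rpow_of_pos_of_le_one_of_nonpos (by positivity) (by nlinarith) hb0)
    _ ≤ (|v 1| * |v 2|) ^ b := by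
        refine rpow_le_rpow_of_nonpos (by positivity) ?_ hb0
        nlinarith [sq_abs (v 1), sq_abs (v 2), sq_nonneg (|v 1| - |v 2|)]
    _ ≤ ∏ i, |v i| ^ b := by
        rw [mul_rpow (abs_nonneg _) (abs_nonneg _), Fin.prod_univ_three, mul_assoc]
        exact le_mul_of_one_le_left (by positivity)
          (one_le_rpow_of_pos_of_le_one_of_nonpos (abs_pos.2 (hv0 0)) hv0le hb0)

lemma integrableOn_ball_sin_polarAngle_smul_rpow {β : ℝ} (hβ : -2 < β) :
    IntegrableOn (fun v : ℝ³ ↦ sin (polarAngle (‖v‖⁻¹ • v)) ^ β) (ball 0 1) := by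
  set b := min (β / 2) 0
  have hb : -1 < b := lt_min (by linarith) (by norm_num)
  have hball : ball (0 : ℝ³) 1 ⊆ WithLp.ofLp ⁻¹' univ.pi fun _ ↦ Ioc (-1) 1 := by
    intro v hv i _
    have := (PiLp.norm_apply_le v i).trans_lt (mem_ball_zero_iff.1 hv)
    rw [Real.norm_eq_abs, abs_lt] at this
    exact ⟨this.1, this.2.le⟩
  refine ((integrableOn_cube_prod_abs_rpow hb).mono_set hball).mono'
    ((((continuous_sin.comp continuous_polarAngle).measurable.comp
      (measurable_norm.inv.smul measurable_id)).pow_const β).aestronglyMeasurable) ?_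
  filter_upwards [ae_restrict_mem measurableSet_ball, ae_restrict_of_ae ae_forall_apply_ne_zero]
    with v hv hv0
  rw [norm_of_nonneg (rpow_nonneg (sin_polarAngle_nonneg _) _)]
  exact sin_polarAngle_smul_rpow_le (min_le_left _ _) (min_le_right _ _)
    (mem_ball_zero_iff.1 hv) hv0

lemma integrable_sin_polarAngle_rpow {β : ℝ} (hβ : -2 < β) :
    Integrable (fun ω : sphere (0 : ℝ³) 1 ↦ sin (polarAngle ω) ^ β)
      (volume : Measure ℝ³).toSphere := by
  have hmeas : Measurable fun v : ℝ³ ↦ sin (polarAngle v) ^ β :=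
    (continuous_sin.comp continuous_polarAngle).measurable.pow_const β
  refine ⟨(hmeas.comp measurable_subtype_coe).aestronglyMeasurable, ?_⟩
  rw [hasFiniteIntegral_iff_ofReal (ae_of_all _ fun ω ↦ rpow_nonneg (sin_polarAngle_nonneg _) _),
    lintegral_toSphere_eq volume (f := fun v ↦ ENNReal.ofReal (sin (polarAngle v) ^ β))
      (ENNReal.measurable_ofReal.comp hmeas)]
  exact ENNReal.mul_lt_top (by simp)
    (integrableOn_ball_sin_polarAngle_smul_rpow hβ).lintegral_lt_top

lemma abs_moller_mul_rpow_le (p q : ℝ³) {a γ d x s : ℝ} (ha : 0 ≤ a) (hd : 0 ≤ d) (hs : 0 ≤ s)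
    (hx0 : 0 ≤ x) (hx : x ≤ relg p q ^ a * s ^ γ) :
    |moller p q * x| ^ d ≤
      (6 * 4 ^ (a / 2)) ^ d * (en p ^ (a * d / 2) * en q ^ (a * d / 2)) * s ^ (γ * d) := by
  have hp := en_pos p
  have hq := en_pos q
  have hbound : |moller p q * x| ≤ 6 * 4 ^ (a / 2) * (en p * en q) ^ (a / 2) * s ^ γ := by
    rw [abs_of_nonneg (mul_nonneg (moller_nonneg p q) hx0)]
    calc moller p q * x ≤ 6 * (relg p q ^ a * s ^ γ) :=
          mul_le_mul (moller_le_six p q) hx hx0 (by norm_num)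
      _ ≤ 6 * ((4 * (en p * en q)) ^ (a / 2) * s ^ γ) := by gcongr; exact relg_rpow_le p q ha
      _ = 6 * 4 ^ (a / 2) * (en p * en q) ^ (a / 2) * s ^ γ := by
          rw [mul_rpow (by norm_num) (by positivity)]; ring
  calc |moller p q * x| ^ d ≤ (6 * 4 ^ (a / 2) * (en p * en q) ^ (a / 2) * s ^ γ) ^ d :=
        rpow_le_rpow (abs_nonneg _) hbound hd
    _ = (6 * 4 ^ (a / 2)) ^ d * (en p ^ (a * d / 2) * en q ^ (a * d / 2)) * s ^ (γ * d) := by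
        rw [mul_rpow (by positivity) (by positivity), mul_rpow (by positivity) (by positivity),
          ← rpow_mul (by positivity), ← rpow_mul hs, ← mul_rpow hp.le hq.le]
        ring_nf

lemma integral_toSphere_abs_moller_mul_rpow_le {σ : ℝ → ℝ → ℝ} {γ a c d : ℝ} (ha : 0 ≤ a)
    (hd : 0 ≤ d) (hβ : -2 < γ * d)
    (hσ : ∀ g θ, 0 ≤ g → θ ∈ Icc 0 π → 0 ≤ σ g θ ∧ σ g θ ≤ g ^ a * sin θ ^ γ) (p q : ℝ³) :
    ∫ ω : sphere (0 : ℝ³) 1, |moller p q * σ (relg p q) (polarAngle ω)| ^ d * exp (-c * en q)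
        ∂(volume : Measure ℝ³).toSphere ≤
      (6 * 4 ^ (a / 2)) ^ d *
        (∫ ω : sphere (0 : ℝ³) 1, sin (polarAngle ω) ^ (γ * d) ∂(volume : Measure ℝ³).toSphere) *
        en p ^ (a * d / 2) * (en q ^ (a * d / 2) * exp (-c * en q)) := by
  set C := (6 * 4 ^ (a / 2)) ^ d * (en p ^ (a * d / 2) * en q ^ (a * d / 2)) * exp (-c * en q)
  calc _ ≤ ∫ ω : sphere (0 : ℝ³) 1, C * sin (polarAngle ω) ^ (γ * d)
        ∂(volume : Measure ℝ³).toSphere := by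
        refine integral_mono_of_nonneg (ae_of_all _ fun ω ↦ by positivity)
          ((integrable_sin_polarAngle_rpow hβ).const_mul C) (ae_of_all _ fun ω ↦ ?_)
        obtain ⟨hσ0, hσle⟩ := hσ _ _ (relg_nonneg p q) (polarAngle_mem_Icc ω)
        have := mul_le_mul_of_nonneg_right
          (abs_moller_mul_rpow_le p q ha hd (sin_polarAngle_nonneg ω) hσ0 hσle)
          (exp_nonneg (-c * en q))
        linarith
    _ = _ := by rw [integral_const_mul]; ring

theorem collision_frequency_bound_general (γ a c d : ℝ) (σ : ℝ → ℝ → ℝ)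
    (hc : 0 < c) (hd1 : 1 ≤ d) (hd2 : d < 2 / max (-γ) 1)
    (ha0 : 0 ≤ a)
    (hσ : ∀ g θ, 0 ≤ g → θ ∈ Set.Icc 0 Real.pi →
      0 ≤ σ g θ ∧ σ g θ ≤ g ^ a * Real.sin θ ^ γ) :
    ∃ C > 0, ∀ p : EuclideanSpace ℝ (Fin 3),
      (∫ q : EuclideanSpace ℝ (Fin 3),
        ∫ ω : Metric.sphere (0 : EuclideanSpace ℝ (Fin 3)) 1,
          |moller p q * σ (relg p q) (polarAngle (ω : EuclideanSpace ℝ (Fin 3)))| ^ d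
              * Real.exp (-c * en q)
            ∂(volume : Measure (EuclideanSpace ℝ (Fin 3))).toSphere)
        ≤ C * (1 + ‖p‖) ^ (a * d / 2) := by
  have hd : 0 ≤ d := zero_le_one.trans hd1
  have hβ : -2 < γ * d := by
    have := (lt_div_iff₀ (zero_lt_one.trans_le (le_max_right (-γ) 1))).1 hd2
    nlinarith [le_max_left (-γ) 1]
  set e := a * d / 2
  set K : ℝ := (6 * 4 ^ (a / 2)) ^ d
  set J := ∫ ω : sphere (0 : ℝ³) 1, sin (polarAngle ω) ^ (γ * d) ∂(volume : Measure ℝ³).toSphere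
  set I := ∫ q : ℝ³, en q ^ e * exp (-c * en q)
  have hJ : 0 ≤ J := integral_nonneg fun ω ↦ rpow_nonneg (sin_polarAngle_nonneg ω) _
  have hI : 0 ≤ I :=
    integral_nonneg fun q ↦ mul_nonneg (rpow_nonneg (en_pos q).le _) (exp_nonneg _)
  refine ⟨K * J * I + 1, by positivity, fun p ↦ ?_⟩
  calc _ ≤ ∫ q : ℝ³, K * J * en p ^ e * (en q ^ e * exp (-c * en q)) :=
        integral_mono_of_nonneg (ae_of_all _ fun q ↦ integral_nonneg fun ω ↦ by positivity)
          ((integrable_en_rpow_mul_exp_neg hc).const_mul _)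
          (ae_of_all _ (integral_toSphere_abs_moller_mul_rpow_le ha0 hd hβ hσ p))
    _ = K * J * I * en p ^ e := by rw [integral_const_mul]; ring
    _ ≤ (K * J * I + 1) * (1 + ‖p‖) ^ e :=
        mul_le_mul (by linarith)
          (rpow_le_rpow (en_pos p).le (en_le_one_add_norm p) (by positivity))
          (rpow_nonneg (en_pos p).le _) (by positivity)

theorem collision_frequency_bound (γ a c d : ℝ) (σ : ℝ → ℝ → ℝ)
    (hγ : -2 < γ) (hc : 0 < c) (hd1 : 1 ≤ d) (hd2 : d < 2 / max (-γ) 1)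
    (ha0 : 0 ≤ a) (ha1 : a ≤ 2 + γ)
    (hσ : ∀ g θ, 0 ≤ g → θ ∈ Set.Icc 0 Real.pi →
      0 ≤ σ g θ ∧ σ g θ ≤ g ^ a * Real.sin θ ^ γ) :
    ∃ C > 0, ∀ p : EuclideanSpace ℝ (Fin 3),
      (∫ q : EuclideanSpace ℝ (Fin 3),
        ∫ ω : Metric.sphere (0 : EuclideanSpace ℝ (Fin 3)) 1,
          |moller p q * σ (relg p q) (polarAngle (ω : EuclideanSpace ℝ (Fin 3)))| ^ d
              * Real.exp (-c * en q)
            ∂(volume : Measure (EuclideanSpace ℝ (Fin 3))).toSphere)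
        ≤ C * (1 + ‖p‖) ^ (a * d / 2) :=
  collision_frequency_bound_general γ a c d σ hc hd1 hd2 ha0 hσ
end
end
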